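/- arXiv:1703.04679 — 4 statements merged into one kernel-verified Lean document; each statement's English description precedes it below -/
import Mathlib

section
/- Let A be an (n+1)×n real matrix of full column rank and B with ‖B A^†‖ ≤ C < 1, and set M := A + B. Then the Gram determinant satisfies (1−C)^{2n} det(AᵀA) ≤ det(MᵀM) ≤ (1+C)^{2n} det(AᵀA). -/
/-!
Full column rank makes `AᵀA` invertible, so `A + B = (1 + E) A` with `E = B A†` and `‖E‖ ≤ C`.
The triangle inequality gives `(1 - C) ‖A x‖ ≤ ‖(1 + E) A x‖ ≤ (1 + C) ‖A x‖` for every `x`, i.e. the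
Loewner bounds `(1 - C)² AᵀA ≤ (A + B)ᵀ(A + B) ≤ (1 + C)² AᵀA`. The determinant is monotone for the
Loewner order on positive semidefinite matrices (write `Q = √P (1 + D) √P` with `D ⪰ 0`), and
`det (c² AᵀA) = c ^ (2n) det (AᵀA)`.
-/

open Matrix

/-- The (Euclidean) operator norm of a real matrix. -/
noncomputable def opNorm {m n : ℕ} (A : Matrix (Fin m) (Fin n) ℝ) : ℝ :=
  ‖(Matrix.toEuclideanLin A).toContinuousLinearMap‖

open scoped MatrixOrder

namespace Matrix

variable {m n : Type*} [Fintype m] [Fintype n]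

theorem isUnit_of_rank_eq_card {K : Type*} [Field K] [DecidableEq n] {A : Matrix n n K}
    (hA : A.rank = Fintype.card n) : IsUnit A := by
  rw [← mulVec_surjective_iff_isUnit, ← coe_mulVecLin, ← LinearMap.range_eq_top]
  apply Submodule.eq_top_of_finrank_eq
  rwa [Module.finrank_fintype_fun_eq_card]

theorem posSemidef_transpose_mul_self (A : Matrix m n ℝ) : (Aᵀ * A).PosSemidef :=
  posSemidef_conjTranspose_mul_self A

theorem dotProduct_transpose_mul_self_mulVec (M : Matrix m n ℝ) (x : n → ℝ) :
    x ⬝ᵥ ((Mᵀ * M) *ᵥ x) = ‖WithLp.toLp 2 (M *ᵥ x)‖ ^ 2 := by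
  rw [← mulVec_mulVec, dotProduct_mulVec, vecMul_transpose, EuclideanSpace.norm_sq_eq]
  simp [dotProduct, sq]

theorem transpose_mul_self_le_of_norm_mulVec_le {M N : Matrix m n ℝ}
    (h : ∀ x, ‖WithLp.toLp 2 (M *ᵥ x)‖ ≤ ‖WithLp.toLp 2 (N *ᵥ x)‖) : Mᵀ * M ≤ Nᵀ * N := by
  rw [le_iff, posSemidef_iff_dotProduct_mulVec]
  refine ⟨(posSemidef_transpose_mul_self N).isHermitian.sub
    (posSemidef_transpose_mul_self M).isHermitian, fun x => ?_⟩
  rw [star_trivial, sub_mulVec, dotProduct_sub, dotProduct_transpose_mul_self_mulVec,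
    dotProduct_transpose_mul_self_mulVec, sub_nonneg]
  exact pow_le_pow_left₀ (norm_nonneg _) (h x) 2

theorem det_transpose_smul_mul_smul [DecidableEq n] (c : ℝ) (A : Matrix m n ℝ) :
    ((c • A)ᵀ * (c • A)).det = c ^ (2 * Fintype.card n) * (Aᵀ * A).det := by
  simp [transpose_smul, smul_smul, pow_mul, sq]

theorem PosSemidef.one_le_det_one_add [DecidableEq n] {N : Matrix n n ℝ} (hN : N.PosSemidef) :
    1 ≤ (1 + N).det := by
  have h := isHermitian_one.add hN.isHermitian
  rw [h.det_eq_prod_eigenvalues]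
  refine Finset.one_le_prod fun i _ => ?_
  have hv : star ⇑(h.eigenvectorBasis i) ⬝ᵥ ⇑(h.eigenvectorBasis i) = 1 := by
    rw [dotProduct_comm, ← EuclideanSpace.inner_eq_star_dotProduct]
    simp
  have := hN.dotProduct_mulVec_nonneg (h.eigenvectorBasis i)
  rw [h.eigenvalues_eq i, add_mulVec, one_mulVec, dotProduct_add, hv]
  simpa using this

theorem PosSemidef.det_le_det [DecidableEq n] {P Q : Matrix n n ℝ} (hP : P.PosSemidef)
    (hPQ : P ≤ Q) : P.det ≤ Q.det := by
  have hQ : Q.PosSemidef := nonneg_iff_posSemidef.mp (hP.nonneg.trans hPQ)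
  rcases hP.det_nonneg.eq_or_lt with h0 | hpos
  · exact h0 ▸ hQ.det_nonneg
  set S := CFC.sqrt P
  have hSS : S * S = P := CFC.sqrt_mul_sqrt_self P hP.nonneg
  have hS : IsUnit S.det := by
    refine isUnit_iff_ne_zero.mpr fun h => hpos.ne' ?_
    rw [← hSS, det_mul, h, zero_mul]
  have hSt : Sᵀ = S := (nonneg_iff_posSemidef.mp (CFC.sqrt_nonneg P)).isHermitian
  set D := S⁻¹ * (Q - P) * S⁻¹
  have hD : D.PosSemidef := by
    simpa [transpose_nonsing_inv, hSt] using hPQ.mul_mul_conjTranspose_same S⁻¹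
  have hQS : Q = S * (1 + D) * S := by
    rw [mul_add, add_mul, mul_one, hSS, ← mul_assoc, ← mul_assoc, mul_nonsing_inv _ hS, one_mul,
      mul_assoc, nonsing_inv_mul _ hS, mul_one, add_sub_cancel]
  calc P.det = P.det * 1 := (mul_one _).symm
    _ ≤ P.det * (1 + D).det := mul_le_mul_of_nonneg_left hD.one_le_det_one_add hpos.le
    _ = Q.det := by rw [hQS, det_mul, det_mul, mul_right_comm, ← det_mul S, hSS]

end Matrix

theorem opNorm_nonneg {m n : ℕ} (E : Matrix (Fin m) (Fin n) ℝ) : 0 ≤ opNorm E := norm_nonneg _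

theorem norm_toLp_mulVec_le_opNorm {m n : ℕ} (E : Matrix (Fin m) (Fin n) ℝ) (x : Fin n → ℝ) :
    ‖WithLp.toLp 2 (E *ᵥ x)‖ ≤ opNorm E * ‖WithLp.toLp 2 x‖ :=
  (toEuclideanLin E).toContinuousLinearMap.le_opNorm (WithLp.toLp 2 x)

section Perturbation

variable {m : ℕ} {n : Type*} [Fintype n] {E : Matrix (Fin m) (Fin m) ℝ} {C : ℝ}

theorem norm_toLp_mulVec_le (hE : opNorm E ≤ C) (x : Fin m → ℝ) :
    ‖WithLp.toLp 2 (E *ᵥ x)‖ ≤ C * ‖WithLp.toLp 2 x‖ :=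
  (norm_toLp_mulVec_le_opNorm E x).trans (mul_le_mul_of_nonneg_right hE (norm_nonneg _))

theorem norm_toLp_one_add_mulVec_le (hE : opNorm E ≤ C) (x : Fin m → ℝ) :
    ‖WithLp.toLp 2 ((1 + E) *ᵥ x)‖ ≤ (1 + C) * ‖WithLp.toLp 2 x‖ := by
  rw [add_mulVec, one_mulVec, WithLp.toLp_add]
  linarith [norm_add_le (WithLp.toLp 2 x) (WithLp.toLp 2 (E *ᵥ x)), norm_toLp_mulVec_le hE x]

theorem sub_mul_norm_toLp_le_norm_one_add_mulVec (hE : opNorm E ≤ C) (x : Fin m → ℝ) :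
    (1 - C) * ‖WithLp.toLp 2 x‖ ≤ ‖WithLp.toLp 2 ((1 + E) *ᵥ x)‖ := by
  rw [add_mulVec, one_mulVec, WithLp.toLp_add]
  linarith [norm_le_add_norm_add (WithLp.toLp 2 x) (WithLp.toLp 2 (E *ᵥ x)),
    norm_toLp_mulVec_le hE x]

theorem transpose_mul_self_one_sub_smul_le_one_add_mul (hE : opNorm E ≤ C) (hC : C ≤ 1)
    (A : Matrix (Fin m) n ℝ) :
    ((1 - C) • A)ᵀ * ((1 - C) • A) ≤ ((1 + E) * A)ᵀ * ((1 + E) * A) := by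
  refine transpose_mul_self_le_of_norm_mulVec_le fun x => ?_
  rw [smul_mulVec, WithLp.toLp_smul, norm_smul, Real.norm_of_nonneg (sub_nonneg.mpr hC),
    ← mulVec_mulVec]
  exact sub_mul_norm_toLp_le_norm_one_add_mulVec hE _

theorem transpose_mul_self_one_add_mul_le_one_add_smul (hE : opNorm E ≤ C)
    (A : Matrix (Fin m) n ℝ) :
    ((1 + E) * A)ᵀ * ((1 + E) * A) ≤ ((1 + C) • A)ᵀ * ((1 + C) • A) := by
  have hC : 0 ≤ 1 + C := by linarith [opNorm_nonneg E]
  refine transpose_mul_self_le_of_norm_mulVec_le fun x => ?_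
  rw [smul_mulVec, WithLp.toLp_smul, norm_smul, Real.norm_of_nonneg hC, ← mulVec_mulVec]
  exact norm_toLp_one_add_mulVec_le hE _

end Perturbation

/-- If `A` is an `(n+1) × n` real matrix of full column rank, `B` satisfies
`‖B A†‖ ≤ C < 1` (with `A† = (AᵀA)⁻¹Aᵀ`), and `M := A + B`, then the Gram
determinant satisfies
`(1-C)^(2n) det(AᵀA) ≤ det(MᵀM) ≤ (1+C)^(2n) det(AᵀA)`. -/
theorem perturbed_matrix_gram_determinant {n : ℕ}
    (A B : Matrix (Fin (n + 1)) (Fin n) ℝ) (C : ℝ)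
    (hA : A.rank = n)
    (hBA : opNorm (B * ((Aᵀ * A)⁻¹ * Aᵀ)) ≤ C) (hC : C < 1) :
    (1 - C) ^ (2 * n) * (Aᵀ * A).det ≤ ((A + B)ᵀ * (A + B)).det ∧
      ((A + B)ᵀ * (A + B)).det ≤ (1 + C) ^ (2 * n) * (Aᵀ * A).det := by
  have hAA : IsUnit (Aᵀ * A).det := (isUnit_iff_isUnit_det _).mp <|
    isUnit_of_rank_eq_card (by rw [rank_transpose_mul_self, hA, Fintype.card_fin])
  have hM : A + B = (1 + B * ((Aᵀ * A)⁻¹ * Aᵀ)) * A := by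
    rw [Matrix.add_mul, Matrix.one_mul, Matrix.mul_assoc, Matrix.mul_assoc, nonsing_inv_mul _ hAA,
      Matrix.mul_one]
  have hlower := (posSemidef_transpose_mul_self _).det_le_det
    (transpose_mul_self_one_sub_smul_le_one_add_mul hBA hC.le A)
  have hupper := (posSemidef_transpose_mul_self _).det_le_det
    (transpose_mul_self_one_add_mul_le_one_add_smul hBA A)
  rw [det_transpose_smul_mul_smul, Fintype.card_fin] at hlower hupper
  rw [hM]
  exact ⟨hlower, hupper⟩
end

section
/- Suppose Π_h is the Ritz projection of the previous setting with lift π_h z = (Π_h z)^ℓ, and in addition: (i) there is an interpolation operator I_h: Z → V_h^ℓ with ‖η − I_hη‖_V ≤ c h^k ‖η‖_Z; (ii) the perturbation bound |a^κ(v_h, φ_h^ℓ) − a_h^κ(V_h, φ_h)| ≤ c h^k ‖v_h‖_V ‖φ_h^ℓ‖_V holds for all discrete functions; then ‖z − π_h z‖_V ≤ C h^k ‖z‖_Z for all z ∈ Z, with C independent of h. -/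
/-!
Strang's first lemma: with `P` the Ritz projection of `u`, the defect `u - ℓ P` is
`a`-orthogonal to the lifted discrete space up to the geometric perturbation
`ε ‖ℓ P‖ ‖ℓ φ‖`, so coercivity of `a` on `V` gives quasi-optimality up to that
consistency error. Discrete coercivity makes `‖ℓ P‖` uniformly bounded by `‖u‖`, and
comparing with the interpolant yields the rate `h ^ k`.
-/

lemma le_div_of_mul_sq_le_mul {α B x : ℝ} (hα : 0 < α) (hB : 0 ≤ B) (hx : 0 ≤ x)
    (h : α * x ^ 2 ≤ B * x) : x ≤ B / α := by
  rw [le_div_iff₀ hα]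
  rcases hx.eq_or_lt with rfl | hpos
  · simpa using hB
  · nlinarith

section RitzProjection

variable {V Vh : Type*} [NormedAddCommGroup V] [NormedAddCommGroup Vh] [Module ℝ V]
  [Module ℝ Vh] {a : V →ₗ[ℝ] V →ₗ[ℝ] ℝ} {ah : Vh →ₗ[ℝ] Vh →ₗ[ℝ] ℝ} {ℓ : Vh →ₗ[ℝ] V}

lemma coercive_lift {αh c₁ : ℝ} (hαh : 0 ≤ αh) (hc₁ : 0 ≤ c₁)
    (hℓ : ∀ v, c₁ * ‖ℓ v‖ ≤ ‖v‖) (hcoer : ∀ v, αh * ‖v‖ ^ 2 ≤ ah v v) (v : Vh) :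
    αh * c₁ ^ 2 * ‖ℓ v‖ ^ 2 ≤ ah v v := by
  have hsq : (c₁ * ‖ℓ v‖) ^ 2 ≤ ‖v‖ ^ 2 := pow_le_pow_left₀ (by positivity) (hℓ v) 2
  calc αh * c₁ ^ 2 * ‖ℓ v‖ ^ 2 = αh * (c₁ * ‖ℓ v‖) ^ 2 := by ring
    _ ≤ αh * ‖v‖ ^ 2 := mul_le_mul_of_nonneg_left hsq hαh
    _ ≤ ah v v := hcoer v

lemma norm_lift_ritz_le {M αh c₁ : ℝ} (hM : 0 ≤ M) (hαh : 0 < αh) (hc₁ : 0 < c₁)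
    (hb : ∀ u v, |a u v| ≤ M * ‖u‖ * ‖v‖) (hℓ : ∀ v, c₁ * ‖ℓ v‖ ≤ ‖v‖)
    (hcoer : ∀ v, αh * ‖v‖ ^ 2 ≤ ah v v) {u : V} {P : Vh}
    (hP : ∀ φ, ah P φ = a u (ℓ φ)) :
    ‖ℓ P‖ ≤ M / (αh * c₁ ^ 2) * ‖u‖ := by
  rw [div_mul_eq_mul_div]
  refine le_div_of_mul_sq_le_mul (by positivity) (by positivity) (norm_nonneg _) ?_
  calc αh * c₁ ^ 2 * ‖ℓ P‖ ^ 2 ≤ ah P P := coercive_lift hαh.le hc₁.le hℓ hcoer P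
    _ = a u (ℓ P) := hP P
    _ ≤ M * ‖u‖ * ‖ℓ P‖ := (abs_le.mp (hb _ _)).2

lemma abs_apply_sub_ritz_le {ε : ℝ}
    (hpert : ∀ v φ, |a (ℓ v) (ℓ φ) - ah v φ| ≤ ε * ‖ℓ v‖ * ‖ℓ φ‖) {u : V} {P : Vh}
    (hP : ∀ φ, ah P φ = a u (ℓ φ)) (φ : Vh) :
    |a (u - ℓ P) (ℓ φ)| ≤ ε * ‖ℓ P‖ * ‖ℓ φ‖ := by
  rw [map_sub, LinearMap.sub_apply, ← hP, abs_sub_comm]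
  exact hpert P φ

lemma norm_sub_lift_le_of_consistency {α M δ : ℝ} (hα : 0 < α) (hM : 0 ≤ M) (hδ : 0 ≤ δ)
    (hcoer : ∀ v, α * ‖v‖ ^ 2 ≤ a v v) (hb : ∀ u v, |a u v| ≤ M * ‖u‖ * ‖v‖)
    {u : V} {P : Vh} (hcons : ∀ φ, |a (u - ℓ P) (ℓ φ)| ≤ δ * ‖ℓ φ‖) (v : Vh) :
    ‖u - ℓ P‖ ≤ (1 + M / α) * ‖u - ℓ v‖ + δ / α := by
  set w := ℓ (v - P)
  have hsplit : u - ℓ P = (u - ℓ v) + w := by simp only [w, map_sub]; abel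
  have hw : ‖w‖ ≤ (M * ‖u - ℓ v‖ + δ) / α := by
    refine le_div_of_mul_sq_le_mul hα (by positivity) (norm_nonneg _) ?_
    have happrox : a (ℓ v - u) w ≤ M * ‖u - ℓ v‖ * ‖w‖ := by
      rw [norm_sub_rev]; exact (abs_le.mp (hb _ _)).2
    calc α * ‖w‖ ^ 2 ≤ a w w := hcoer w
      _ = a (ℓ v - u) w + a (u - ℓ P) w := by
        rw [← LinearMap.add_apply, ← map_add]; congr 2; simp only [w, map_sub]; abel
      _ ≤ M * ‖u - ℓ v‖ * ‖w‖ + δ * ‖w‖ := add_le_add happrox (abs_le.mp (hcons _)).2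
      _ = (M * ‖u - ℓ v‖ + δ) * ‖w‖ := by ring
  calc ‖u - ℓ P‖ ≤ ‖u - ℓ v‖ + ‖w‖ := hsplit ▸ norm_add_le _ _
    _ ≤ ‖u - ℓ v‖ + (M * ‖u - ℓ v‖ + δ) / α := by gcongr
    _ = (1 + M / α) * ‖u - ℓ v‖ + δ / α := by field_simp; ring

end RitzProjection

theorem ritz_projection_V_error_general
    {V : Type*} [NormedAddCommGroup V] [InnerProductSpace ℝ V] [CompleteSpace V]
    {Z : Type*} [NormedAddCommGroup Z] [NormedSpace ℝ Z]
    (ιZ : Z →ₗ[ℝ] V) (cE : ℝ) (hcE : 0 < cE)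
    (hemb : ∀ η : Z, ‖ιZ η‖ ≤ cE * ‖η‖)
    (k : ℕ)
    (α M αh Mh c₁ c₂ cI cP : ℝ)
    (hα : 0 < α) (hM : 0 < M) (hαh : 0 < αh)
    (hc₁ : 0 < c₁) (hcI : 0 < cI) (hcP : 0 < cP)
    (aκ : V →ₗ[ℝ] V →ₗ[ℝ] ℝ)
    (haκc : ∀ v : V, α * ‖v‖ ^ 2 ≤ aκ v v)
    (haκb : ∀ u v : V, |aκ u v| ≤ M * ‖u‖ * ‖v‖) :
    ∃ C : ℝ, 0 < C ∧
      ∀ (h : ℝ), 0 < h →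
      ∀ (Vh : Type) (_ : NormedAddCommGroup Vh), ∀ (_ : NormedSpace ℝ Vh),
      ∀ (_ : FiniteDimensional ℝ Vh),
      ∀ (ℓ : Vh →ₗ[ℝ] V),
      (∀ vh : Vh, c₁ * ‖ℓ vh‖ ≤ ‖vh‖ ∧ ‖vh‖ ≤ c₂ * ‖ℓ vh‖) →
      ∀ (ahκ : Vh →ₗ[ℝ] Vh →ₗ[ℝ] ℝ),
      (∀ v : Vh, αh * ‖v‖ ^ 2 ≤ ahκ v v) →
      (∀ u v : Vh, |ahκ u v| ≤ Mh * ‖u‖ * ‖v‖) →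
      ∀ (Ih : Z →ₗ[ℝ] Vh),
      (∀ η : Z, ‖ιZ η - ℓ (Ih η)‖ ≤ cI * h ^ k * ‖η‖) →
      (∀ vh φh : Vh, |aκ (ℓ vh) (ℓ φh) - ahκ vh φh| ≤ cP * h ^ k * ‖ℓ vh‖ * ‖ℓ φh‖) →
      ∀ (z : Z) (Pz : Vh),
        (∀ φh : Vh, ahκ Pz φh = aκ (ιZ z) (ℓ φh)) →
        ‖ιZ z - ℓ Pz‖ ≤ C * h ^ k * ‖z‖ := by
  refine ⟨(1 + M / α) * cI + cP * (M / (αh * c₁ ^ 2) * cE) / α, by positivity, ?_⟩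
  intro h _ Vh _ _ _ ℓ hℓ ahκ hahc _ Ih hIh hpert z Pz hPz
  have hstab : ‖ℓ Pz‖ ≤ M / (αh * c₁ ^ 2) * (cE * ‖z‖) :=
    (norm_lift_ritz_le hM.le hαh hc₁ haκb (fun v ↦ (hℓ v).1) hahc hPz).trans
      (by gcongr; exact hemb z)
  have hcons : ∀ φ, |aκ (ιZ z - ℓ Pz) (ℓ φ)| ≤ cP * h ^ k * ‖ℓ Pz‖ * ‖ℓ φ‖ :=
    abs_apply_sub_ritz_le hpert hPz
  calc ‖ιZ z - ℓ Pz‖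
      ≤ (1 + M / α) * ‖ιZ z - ℓ (Ih z)‖ + cP * h ^ k * ‖ℓ Pz‖ / α :=
        norm_sub_lift_le_of_consistency hα hM.le (by positivity) haκc haκb hcons (Ih z)
    _ ≤ (1 + M / α) * (cI * h ^ k * ‖z‖)
          + cP * h ^ k * (M / (αh * c₁ ^ 2) * (cE * ‖z‖)) / α := by
        gcongr; exact hIh z
    _ = ((1 + M / α) * cI + cP * (M / (αh * c₁ ^ 2) * cE) / α) * h ^ k * ‖z‖ := by ring

/-- V-norm error bound for the abstract Ritz projection: with a bounded coercive
form `a^κ` on a Hilbert space `V`, a continuously embedded smooth space `Z`, and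
for each mesh size `h` a finite-dimensional discrete space `V_h` with lift `ℓ`
(two-sided norm equivalence), uniformly coercive and bounded discrete forms
`a_h^κ`, an interpolation operator with rate `h^k` into the lifted space, and a
geometric perturbation bound of order `h^k` on discrete functions, the Ritz
projection `Π_h z` (defined by `a_h^κ(Π_h z, φ_h) = a^κ(z, φ_h^ℓ)`) satisfies
`‖z - π_h z‖_V ≤ C h^k ‖z‖_Z` with `C` independent of `h`. -/
theorem ritz_projection_V_error
    {V : Type*} [NormedAddCommGroup V] [InnerProductSpace ℝ V] [CompleteSpace V]
    {Z : Type*} [NormedAddCommGroup Z] [NormedSpace ℝ Z]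
    (ιZ : Z →ₗ[ℝ] V) (cE : ℝ) (hcE : 0 < cE)
    (hemb : ∀ η : Z, ‖ιZ η‖ ≤ cE * ‖η‖)
    (k : ℕ)
    (α M αh Mh c₁ c₂ cI cP : ℝ)
    (hα : 0 < α) (hM : 0 < M) (hαh : 0 < αh) (hMh : 0 < Mh)
    (hc₁ : 0 < c₁) (hc₂ : 0 < c₂) (hcI : 0 < cI) (hcP : 0 < cP)
    (aκ : V →ₗ[ℝ] V →ₗ[ℝ] ℝ)
    (haκc : ∀ v : V, α * ‖v‖ ^ 2 ≤ aκ v v)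
    (haκb : ∀ u v : V, |aκ u v| ≤ M * ‖u‖ * ‖v‖) :
    ∃ C : ℝ, 0 < C ∧
      ∀ (h : ℝ), 0 < h →
      ∀ (Vh : Type) (_ : NormedAddCommGroup Vh), ∀ (_ : NormedSpace ℝ Vh),
      ∀ (_ : FiniteDimensional ℝ Vh),
      ∀ (ℓ : Vh →ₗ[ℝ] V),
      (∀ vh : Vh, c₁ * ‖ℓ vh‖ ≤ ‖vh‖ ∧ ‖vh‖ ≤ c₂ * ‖ℓ vh‖) →
      ∀ (ahκ : Vh →ₗ[ℝ] Vh →ₗ[ℝ] ℝ),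
      (∀ v : Vh, αh * ‖v‖ ^ 2 ≤ ahκ v v) →
      (∀ u v : Vh, |ahκ u v| ≤ Mh * ‖u‖ * ‖v‖) →
      ∀ (Ih : Z →ₗ[ℝ] Vh),
      (∀ η : Z, ‖ιZ η - ℓ (Ih η)‖ ≤ cI * h ^ k * ‖η‖) →
      (∀ vh φh : Vh, |aκ (ℓ vh) (ℓ φh) - ahκ vh φh| ≤ cP * h ^ k * ‖ℓ vh‖ * ‖ℓ φh‖) →
      ∀ (z : Z) (Pz : Vh),
        (∀ φh : Vh, ahκ Pz φh = aκ (ιZ z) (ℓ φh)) →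
        ‖ιZ z - ℓ Pz‖ ≤ C * h ^ k * ‖z‖ :=
  ritz_projection_V_error_general ιZ cE hcE hemb k α M αh Mh c₁ c₂ cI cP hα hM hαh hc₁ hcI hcP aκ
    haκc haκb
end

section
/- In the setting of the abstract Ritz projection, assume additionally: the dual problem a^κ(χ, ζ) = m(ξ, χ) for all χ ∈ V has, for each ξ ∈ H, a unique solution ζ with ‖ζ‖_{Z₀} ≤ c‖ξ‖_H; the interpolation estimate ‖η − I_hη‖_H + h‖η − I_hη‖_V ≤ ch²‖η‖_{Z₀}; and improved perturbation bound |a^κ(η,φ) − a_h^κ(η^{−ℓ},φ^{−ℓ})| ≤ ch^{k+1}‖η‖_{Z₀}‖φ‖_{Z₀} for smooth η,φ ∈ Z₀. Then the H-norm bound ‖z − π_h z‖_H ≤ Ch^{k+1}‖z‖_Z holds. -/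
set_option maxHeartbeats 2000000 in
/-- H-norm error bound for the abstract Ritz projection (Aubin–Nitsche duality).
The discrete objects are modelled by a finite-dimensional subspace `S ⊂ V`
(the lifted finite element space) together with a perturbed bilinear form
`ã_h^κ` (the pulled-back discrete form).  Under uniform coercivity/boundedness,
interpolation estimates on the smooth spaces `Z ⊂ Z₀ ⊂ V` with rates
`h^{k+1}, h^k` and `h², h` respectively, geometric perturbation bounds of order
`h^k` (on discrete plus smooth functions) and `h^{k+1}` (on smooth functions),
and `H²`-regularity of the dual problem, the Ritz projection satisfies
`‖z - π_h z‖_H ≤ C h^{k+1} ‖z‖_Z` with `C` independent of `h`. -/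
theorem ritz_projection_H_error
    {V : Type*} [NormedAddCommGroup V] [InnerProductSpace ℝ V] [CompleteSpace V]
    {H : Type*} [NormedAddCommGroup H] [InnerProductSpace ℝ H] [CompleteSpace H]
    {Z₀ : Type*} [NormedAddCommGroup Z₀] [NormedSpace ℝ Z₀]
    {Z : Type*} [NormedAddCommGroup Z] [NormedSpace ℝ Z]
    (j : V →ₗ[ℝ] H) (cJ : ℝ) (hcJ : 0 < cJ) (hj : ∀ v : V, ‖j v‖ ≤ cJ * ‖v‖)
    (ι₀ : Z₀ →ₗ[ℝ] V) (cE₀ : ℝ) (hcE₀ : 0 < cE₀) (hι₀ : ∀ η : Z₀, ‖ι₀ η‖ ≤ cE₀ * ‖η‖)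
    (ι₁ : Z →ₗ[ℝ] Z₀) (cE₁ : ℝ) (hcE₁ : 0 < cE₁) (hι₁ : ∀ z : Z, ‖ι₁ z‖ ≤ cE₁ * ‖z‖)
    (m : H →ₗ[ℝ] H →ₗ[ℝ] ℝ) (cm₁ cm₂ : ℝ) (hcm₁ : 0 < cm₁) (hcm₂ : 0 < cm₂)
    (hmsymm : ∀ ξ χ : H, m ξ χ = m χ ξ)
    (hm : ∀ ξ : H, cm₁ * ‖ξ‖ ≤ Real.sqrt (m ξ ξ) ∧ Real.sqrt (m ξ ξ) ≤ cm₂ * ‖ξ‖)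
    (aκ : V →ₗ[ℝ] V →ₗ[ℝ] ℝ) (α M : ℝ) (hα : 0 < α) (hM : 0 < M)
    (haκc : ∀ v : V, α * ‖v‖ ^ 2 ≤ aκ v v)
    (haκb : ∀ u v : V, |aκ u v| ≤ M * ‖u‖ * ‖v‖)
    (k : ℕ) (hk : 1 ≤ k)
    (αh Mh cI cP cP' cR : ℝ)
    (hαh : 0 < αh) (hMh : 0 < Mh) (hcI : 0 < cI) (hcP : 0 < cP)
    (hcP' : 0 < cP') (hcR : 0 < cR)
    -- regularity of the dual problem
    (hdual : ∀ ξ : H, ∃ ζ : Z₀,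
      (∀ χ : V, aκ χ (ι₀ ζ) = m ξ (j χ)) ∧ ‖ζ‖ ≤ cR * ‖ξ‖) :
    ∃ C : ℝ, 0 < C ∧
      ∀ (h : ℝ), 0 < h → h ≤ 1 →
      ∀ (S : Submodule ℝ V), FiniteDimensional ℝ S →
      ∀ (ahκ : V →ₗ[ℝ] V →ₗ[ℝ] ℝ),
      -- uniform coercivity on the discrete space and boundedness
      (∀ v ∈ S, αh * ‖v‖ ^ 2 ≤ ahκ v v) →
      (∀ u v : V, |ahκ u v| ≤ Mh * ‖u‖ * ‖v‖) →
      -- interpolation operators into the (lifted) discrete space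
      ∀ (Ih₀ : Z₀ →ₗ[ℝ] V) (IhZ : Z →ₗ[ℝ] V),
      (∀ η : Z₀, Ih₀ η ∈ S) → (∀ z : Z, IhZ z ∈ S) →
      -- interpolation estimate (I1) on Z₀
      (∀ η : Z₀, ‖j (ι₀ η - Ih₀ η)‖ ≤ cI * h ^ 2 * ‖η‖ ∧
        ‖ι₀ η - Ih₀ η‖ ≤ cI * h * ‖η‖) →
      -- interpolation estimate (I2) on Z
      (∀ z : Z, ‖j (ι₀ (ι₁ z) - IhZ z)‖ ≤ cI * h ^ (k + 1) * ‖z‖ ∧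
        ‖ι₀ (ι₁ z) - IhZ z‖ ≤ cI * h ^ k * ‖z‖) →
      -- perturbation estimate (P3) on discrete plus smooth functions
      (∀ u v : V, u ∈ S ⊔ LinearMap.range ι₀ → v ∈ S ⊔ LinearMap.range ι₀ →
        |aκ u v - ahκ u v| ≤ cP * h ^ k * ‖u‖ * ‖v‖) →
      -- improved perturbation estimate (P3') on smooth functions
      (∀ η φ : Z₀,
        |aκ (ι₀ η) (ι₀ φ) - ahκ (ι₀ η) (ι₀ φ)| ≤ cP' * h ^ (k + 1) * ‖η‖ * ‖φ‖) →
      -- the Ritz projection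
      ∀ (z : Z) (Pz : V), Pz ∈ S →
        (∀ φ ∈ S, ahκ Pz φ = aκ (ι₀ (ι₁ z)) φ) →
        ‖j (ι₀ (ι₁ z) - Pz)‖ ≤ C * h ^ (k + 1) * ‖z‖ := by
  classical
  set C₁ : ℝ := cI + (cP * (cE₀ * cE₁ + cI) + M * cI) / αh with hC₁def
  have hC₁ : 0 < C₁ := by rw [hC₁def]; positivity
  set C₂ : ℝ := M * C₁ * cI + cP' * cE₁ + cP * cE₀ * cE₁ * cI + cP * C₁ * (cE₀ + cI)
    with hC₂def
  have hC₂ : 0 < C₂ := by rw [hC₂def]; positivity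
  refine ⟨C₂ * cR / cm₁ ^ 2, by positivity, ?_⟩
  intro h hh0 hh1 S _ ahκ hco hbd Ih₀ IhZ hIh₀S hIhZS hI1 hI2 hP3 hP3' z Pz hPzS hGal
  have hk1 : h ^ k ≤ 1 := pow_le_one₀ hh0.le hh1
  have h2k : h ^ k * h ^ k ≤ h ^ (k + 1) := by
    rw [← pow_add]
    exact pow_le_pow_of_le_one hh0.le hh1 (by omega)
  -- interpolation error in V for z
  have hρ : ‖ι₀ (ι₁ z) - IhZ z‖ ≤ cI * h ^ k * ‖z‖ := (hI2 z).2
  have hW : ‖ι₀ (ι₁ z)‖ ≤ cE₀ * cE₁ * ‖z‖ := by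
    calc ‖ι₀ (ι₁ z)‖ ≤ cE₀ * ‖ι₁ z‖ := hι₀ _
      _ ≤ cE₀ * (cE₁ * ‖z‖) := by gcongr; exact hι₁ z
      _ = cE₀ * cE₁ * ‖z‖ := by ring
  have hIz : ‖IhZ z‖ ≤ (cE₀ * cE₁ + cI) * ‖z‖ := by
    have h1 : ‖IhZ z‖ ≤ ‖ι₀ (ι₁ z)‖ + ‖ι₀ (ι₁ z) - IhZ z‖ := by
      calc ‖IhZ z‖ = ‖ι₀ (ι₁ z) - (ι₀ (ι₁ z) - IhZ z)‖ := by rw [sub_sub_cancel]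
        _ ≤ ‖ι₀ (ι₁ z)‖ + ‖ι₀ (ι₁ z) - IhZ z‖ := norm_sub_le _ _
    have h2 : cI * h ^ k * ‖z‖ ≤ cI * 1 * ‖z‖ := by gcongr
    linarith
  -- energy estimate
  have hθS : IhZ z - Pz ∈ S := S.sub_mem (hIhZS z) hPzS
  have hcoθ := hco _ hθS
  have eid : ahκ (IhZ z - Pz) (IhZ z - Pz)
      = -(aκ (IhZ z) (IhZ z - Pz) - ahκ (IhZ z) (IhZ z - Pz))
        - aκ (ι₀ (ι₁ z) - IhZ z) (IhZ z - Pz) := by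
    have hG := hGal (IhZ z - Pz) hθS
    simp only [map_sub, LinearMap.sub_apply] at hG ⊢
    linarith
  have hb1 := hP3 (IhZ z) (IhZ z - Pz) (Submodule.mem_sup_left (hIhZS z))
    (Submodule.mem_sup_left hθS)
  have hb2 := haκb (ι₀ (ι₁ z) - IhZ z) (IhZ z - Pz)
  have hstep : ahκ (IhZ z - Pz) (IhZ z - Pz)
      ≤ (cP * (cE₀ * cE₁ + cI) + M * cI) * h ^ k * ‖z‖ * ‖IhZ z - Pz‖ := by
    rw [eid]
    have e1 := neg_abs_le (aκ (IhZ z) (IhZ z - Pz) - ahκ (IhZ z) (IhZ z - Pz))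
    have e2 := neg_abs_le (aκ (ι₀ (ι₁ z) - IhZ z) (IhZ z - Pz))
    have e3 : |aκ (IhZ z) (IhZ z - Pz) - ahκ (IhZ z) (IhZ z - Pz)|
        ≤ cP * h ^ k * ((cE₀ * cE₁ + cI) * ‖z‖) * ‖IhZ z - Pz‖ := by
      refine hb1.trans ?_
      gcongr
    have e4 : |aκ (ι₀ (ι₁ z) - IhZ z) (IhZ z - Pz)|
        ≤ M * (cI * h ^ k * ‖z‖) * ‖IhZ z - Pz‖ := by
      refine hb2.trans ?_
      gcongr
    nlinarith [e1, e2, e3, e4]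
  have hθ : ‖IhZ z - Pz‖ ≤ (cP * (cE₀ * cE₁ + cI) + M * cI) / αh * h ^ k * ‖z‖ := by
    rcases eq_or_lt_of_le (norm_nonneg (IhZ z - Pz)) with h0 | h0
    · rw [← h0]; positivity
    · have hlin : αh * ‖IhZ z - Pz‖ ≤ (cP * (cE₀ * cE₁ + cI) + M * cI) * h ^ k * ‖z‖ := by
        nlinarith [hcoθ, hstep, h0]
      rw [div_mul_eq_mul_div, div_mul_eq_mul_div, le_div_iff₀ hαh]
      linarith
  have henergy : ‖ι₀ (ι₁ z) - Pz‖ ≤ C₁ * h ^ k * ‖z‖ := by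
    calc ‖ι₀ (ι₁ z) - Pz‖ = ‖(ι₀ (ι₁ z) - IhZ z) + (IhZ z - Pz)‖ := by
          rw [sub_add_sub_cancel]
      _ ≤ ‖ι₀ (ι₁ z) - IhZ z‖ + ‖IhZ z - Pz‖ := norm_add_le _ _
      _ ≤ cI * h ^ k * ‖z‖ + (cP * (cE₀ * cE₁ + cI) + M * cI) / αh * h ^ k * ‖z‖ :=
          add_le_add hρ hθ
      _ = C₁ * h ^ k * ‖z‖ := by rw [hC₁def]; ring
  -- duality argument
  by_cases hje : ‖j (ι₀ (ι₁ z) - Pz)‖ = 0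
  · rw [hje]; positivity
  · have hje0 : 0 < ‖j (ι₀ (ι₁ z) - Pz)‖ := (norm_nonneg _).lt_of_ne (Ne.symm hje)
    obtain ⟨ζ, hζeq, hζb⟩ := hdual (j (ι₀ (ι₁ z) - Pz))
    have hmid : m (j (ι₀ (ι₁ z) - Pz)) (j (ι₀ (ι₁ z) - Pz))
        = aκ (ι₀ (ι₁ z) - Pz) (ι₀ ζ) := (hζeq _).symm
    have key : aκ (ι₀ (ι₁ z) - Pz) (ι₀ ζ) =
        aκ (ι₀ (ι₁ z) - Pz) (ι₀ ζ - Ih₀ ζ)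
        + (aκ (ι₀ (ι₁ z) - Pz) (Ih₀ ζ) - ahκ (ι₀ (ι₁ z) - Pz) (Ih₀ ζ))
        - (aκ (ι₀ (ι₁ z)) (ι₀ ζ) - ahκ (ι₀ (ι₁ z)) (ι₀ ζ))
        + (aκ (ι₀ (ι₁ z)) (ι₀ ζ - Ih₀ ζ) - ahκ (ι₀ (ι₁ z)) (ι₀ ζ - Ih₀ ζ)) := by
      have hG := hGal (Ih₀ ζ) (hIh₀S ζ)
      simp only [map_sub, LinearMap.sub_apply] at hG ⊢
      linarith
    -- memberships
    have hmemW : ι₀ (ι₁ z) ∈ S ⊔ LinearMap.range ι₀ := Submodule.mem_sup_right ⟨ι₁ z, rfl⟩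
    have hmemE : ι₀ (ι₁ z) - Pz ∈ S ⊔ LinearMap.range ι₀ :=
      Submodule.sub_mem _ hmemW (Submodule.mem_sup_left hPzS)
    have hmemQ : Ih₀ ζ ∈ S ⊔ LinearMap.range ι₀ := Submodule.mem_sup_left (hIh₀S ζ)
    have hmemD : ι₀ ζ - Ih₀ ζ ∈ S ⊔ LinearMap.range ι₀ :=
      Submodule.sub_mem _ (Submodule.mem_sup_right ⟨ζ, rfl⟩) hmemQ
    -- norm bounds
    have hDn : ‖ι₀ ζ - Ih₀ ζ‖ ≤ cI * h * ‖ζ‖ := (hI1 ζ).2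
    have hQ : ‖Ih₀ ζ‖ ≤ (cE₀ + cI) * ‖ζ‖ := by
      have h1 : ‖Ih₀ ζ‖ ≤ ‖ι₀ ζ‖ + ‖ι₀ ζ - Ih₀ ζ‖ := by
        calc ‖Ih₀ ζ‖ = ‖ι₀ ζ - (ι₀ ζ - Ih₀ ζ)‖ := by rw [sub_sub_cancel]
          _ ≤ ‖ι₀ ζ‖ + ‖ι₀ ζ - Ih₀ ζ‖ := norm_sub_le _ _
      have h2 : cI * h * ‖ζ‖ ≤ cI * 1 * ‖ζ‖ := by gcongr
      have h3 := hι₀ ζ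
      linarith
    -- term bounds
    have hT1 : |aκ (ι₀ (ι₁ z) - Pz) (ι₀ ζ - Ih₀ ζ)|
        ≤ M * C₁ * cI * (h ^ (k + 1) * ‖z‖ * ‖ζ‖) := by
      calc |aκ (ι₀ (ι₁ z) - Pz) (ι₀ ζ - Ih₀ ζ)|
          ≤ M * ‖ι₀ (ι₁ z) - Pz‖ * ‖ι₀ ζ - Ih₀ ζ‖ := haκb _ _
        _ ≤ M * (C₁ * h ^ k * ‖z‖) * (cI * h * ‖ζ‖) := by gcongr
        _ = M * C₁ * cI * (h ^ k * h * ‖z‖ * ‖ζ‖) := by ring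
        _ = M * C₁ * cI * (h ^ (k + 1) * ‖z‖ * ‖ζ‖) := by rw [pow_succ]
    have hT4 : |aκ (ι₀ (ι₁ z) - Pz) (Ih₀ ζ) - ahκ (ι₀ (ι₁ z) - Pz) (Ih₀ ζ)|
        ≤ cP * C₁ * (cE₀ + cI) * (h ^ (k + 1) * ‖z‖ * ‖ζ‖) := by
      calc |aκ (ι₀ (ι₁ z) - Pz) (Ih₀ ζ) - ahκ (ι₀ (ι₁ z) - Pz) (Ih₀ ζ)|
          ≤ cP * h ^ k * ‖ι₀ (ι₁ z) - Pz‖ * ‖Ih₀ ζ‖ := hP3 _ _ hmemE hmemQ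
        _ ≤ cP * h ^ k * (C₁ * h ^ k * ‖z‖) * ((cE₀ + cI) * ‖ζ‖) := by gcongr
        _ = cP * C₁ * (cE₀ + cI) * (h ^ k * h ^ k * ‖z‖ * ‖ζ‖) := by ring
        _ ≤ cP * C₁ * (cE₀ + cI) * (h ^ (k + 1) * ‖z‖ * ‖ζ‖) := by gcongr
    have hT2 : |aκ (ι₀ (ι₁ z)) (ι₀ ζ) - ahκ (ι₀ (ι₁ z)) (ι₀ ζ)|
        ≤ cP' * cE₁ * (h ^ (k + 1) * ‖z‖ * ‖ζ‖) := by
      calc |aκ (ι₀ (ι₁ z)) (ι₀ ζ) - ahκ (ι₀ (ι₁ z)) (ι₀ ζ)|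
          ≤ cP' * h ^ (k + 1) * ‖ι₁ z‖ * ‖ζ‖ := hP3' _ _
        _ ≤ cP' * h ^ (k + 1) * (cE₁ * ‖z‖) * ‖ζ‖ := by gcongr; exact hι₁ z
        _ = cP' * cE₁ * (h ^ (k + 1) * ‖z‖ * ‖ζ‖) := by ring
    have hT3 : |aκ (ι₀ (ι₁ z)) (ι₀ ζ - Ih₀ ζ) - ahκ (ι₀ (ι₁ z)) (ι₀ ζ - Ih₀ ζ)|
        ≤ cP * cE₀ * cE₁ * cI * (h ^ (k + 1) * ‖z‖ * ‖ζ‖) := by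
      calc |aκ (ι₀ (ι₁ z)) (ι₀ ζ - Ih₀ ζ) - ahκ (ι₀ (ι₁ z)) (ι₀ ζ - Ih₀ ζ)|
          ≤ cP * h ^ k * ‖ι₀ (ι₁ z)‖ * ‖ι₀ ζ - Ih₀ ζ‖ := hP3 _ _ hmemW hmemD
        _ ≤ cP * h ^ k * (cE₀ * cE₁ * ‖z‖) * (cI * h * ‖ζ‖) := by gcongr
        _ = cP * cE₀ * cE₁ * cI * (h ^ k * h * ‖z‖ * ‖ζ‖) := by ring
        _ = cP * cE₀ * cE₁ * cI * (h ^ (k + 1) * ‖z‖ * ‖ζ‖) := by rw [pow_succ]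
    -- combine
    have hsum : m (j (ι₀ (ι₁ z) - Pz)) (j (ι₀ (ι₁ z) - Pz))
        ≤ C₂ * (h ^ (k + 1) * ‖z‖ * ‖ζ‖) := by
      rw [hmid, key, hC₂def]
      have l1 := le_abs_self (aκ (ι₀ (ι₁ z) - Pz) (ι₀ ζ - Ih₀ ζ))
      have l2 := le_abs_self (aκ (ι₀ (ι₁ z) - Pz) (Ih₀ ζ) - ahκ (ι₀ (ι₁ z) - Pz) (Ih₀ ζ))
      have l3 := neg_abs_le (aκ (ι₀ (ι₁ z)) (ι₀ ζ) - ahκ (ι₀ (ι₁ z)) (ι₀ ζ))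
      have l4 := le_abs_self (aκ (ι₀ (ι₁ z)) (ι₀ ζ - Ih₀ ζ) - ahκ (ι₀ (ι₁ z)) (ι₀ ζ - Ih₀ ζ))
      nlinarith [hT1, hT2, hT3, hT4]
    -- lower bound and conclusion
    have hm1 := (hm (j (ι₀ (ι₁ z) - Pz))).1
    have hmpos : 0 < m (j (ι₀ (ι₁ z) - Pz)) (j (ι₀ (ι₁ z) - Pz)) :=
      Real.sqrt_pos.mp (lt_of_lt_of_le (by positivity) hm1)
    have hsq : (cm₁ * ‖j (ι₀ (ι₁ z) - Pz)‖) ^ 2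
        ≤ m (j (ι₀ (ι₁ z) - Pz)) (j (ι₀ (ι₁ z) - Pz)) := by
      calc (cm₁ * ‖j (ι₀ (ι₁ z) - Pz)‖) ^ 2
          ≤ Real.sqrt (m (j (ι₀ (ι₁ z) - Pz)) (j (ι₀ (ι₁ z) - Pz))) ^ 2 :=
            pow_le_pow_left₀ (by positivity) hm1 2
        _ = m (j (ι₀ (ι₁ z) - Pz)) (j (ι₀ (ι₁ z) - Pz)) := Real.sq_sqrt hmpos.le
    have hup : m (j (ι₀ (ι₁ z) - Pz)) (j (ι₀ (ι₁ z) - Pz))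
        ≤ C₂ * cR * (h ^ (k + 1) * ‖z‖) * ‖j (ι₀ (ι₁ z) - Pz)‖ := by
      calc m (j (ι₀ (ι₁ z) - Pz)) (j (ι₀ (ι₁ z) - Pz))
          ≤ C₂ * (h ^ (k + 1) * ‖z‖ * ‖ζ‖) := hsum
        _ ≤ C₂ * (h ^ (k + 1) * ‖z‖ * (cR * ‖j (ι₀ (ι₁ z) - Pz)‖)) := by gcongr
        _ = C₂ * cR * (h ^ (k + 1) * ‖z‖) * ‖j (ι₀ (ι₁ z) - Pz)‖ := by ring
    have hfin : cm₁ ^ 2 * ‖j (ι₀ (ι₁ z) - Pz)‖ ≤ C₂ * cR * (h ^ (k + 1) * ‖z‖) := by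
      nlinarith [hsq, hup, hje0]
    rw [div_mul_eq_mul_div, div_mul_eq_mul_div, le_div_iff₀ (by positivity : (0:ℝ) < cm₁ ^ 2)]
    nlinarith [hfin]
end

section
/- Let m_h(t;·,·) be a family of symmetric bilinear forms on finite-dimensional spaces V_h(t) with c₁‖v‖² ≤ m_h(t;v,v) ≤ c₂‖v‖², and a_h(t;·,·) bilinear forms satisfying a_h(t;v,v) ≥ c₄‖v‖_{V_h}² − c₅‖v‖². Suppose the transport identity (1/2)(d/dt)m_h(t;U,U) = m_h(t;∂°U,U) + (1/2)g_h(t;U,U) holds with |g_h(t;v,w)| ≤ c₃‖v‖‖w‖, and that U(t) solves (d/dt)m_h(t;U,φ) + a_h(t;U,φ) = m_h(t;U,∂°φ) for all test trajectories φ with ∂°φ arbitrary in V_h(t). Then testing with φ = U yields (1/2)(d/dt)m_h(t;U,U) + a_h(t;U,U) = −(1/2)g_h(t;U,U), and consequently sup_t ‖U(t)‖² + ∫₀ᵀ‖U‖_{V_h}²dt ≤ C‖U(0)‖² with C depending only on c₁,…,c₅, T. -/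
/-!
Testing the scheme with `φ = U` and comparing with the transport identity (derivatives within
`[0, T]` are unique) gives the energy identity `y' = -g(U,U) - 2 a(U,U)` for `y = m(U,U)`.
The bound on `g` and the Gårding inequality turn it into `y' + 2 c₄ ‖U‖_V² ≤ α y` with
`α = (c₃ + 2 c₅) / c₁`. Grönwall's inequality for `y + 2 c₄ ∫ ‖U‖_V²` then bounds both
`c₁ ‖U(t)‖²` and `2 c₄ ∫₀ᵀ ‖U‖_V²` by `y(0) e^{αT} ≤ c₂ ‖U(0)‖² e^{αT}`.
-/

open MeasureTheory Set Real Topology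

theorem hasDerivWithinAt_energy {W : Type*} {y : ℝ → ℝ} {S : Set ℝ} {t : ℝ}
    {M A G : W → W → ℝ} {u u' : W} (hS : UniqueDiffWithinAt ℝ S t) (hM : M u u' = M u' u)
    (hscheme : HasDerivWithinAt y (M u u' - A u u) S t)
    (htransport : HasDerivWithinAt y (2 * M u' u + G u u) S t) :
    HasDerivWithinAt y (-G u u - 2 * A u u) S t := by
  have h := hS.eq_deriv S hscheme htransport
  convert htransport using 1
  linarith

theorem energy_rate_add_le {W : Type*} [SeminormedAddCommGroup W] {M A G : W → W → ℝ}
    {nV : W → ℝ} {c₁ c₃ c₄ c₅ : ℝ} (hc₁ : 0 < c₁) (hc : 0 ≤ c₃ + 2 * c₅) {v : W}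
    (hM : c₁ * ‖v‖ ^ 2 ≤ M v v) (hG : |G v v| ≤ c₃ * ‖v‖ * ‖v‖)
    (hA : c₄ * nV v ^ 2 - c₅ * ‖v‖ ^ 2 ≤ A v v) :
    -G v v - 2 * A v v + 2 * c₄ * nV v ^ 2 ≤ (c₃ + 2 * c₅) / c₁ * M v v :=
  calc -G v v - 2 * A v v + 2 * c₄ * nV v ^ 2
      ≤ (c₃ + 2 * c₅) / c₁ * (c₁ * ‖v‖ ^ 2) := by
        rw [← mul_assoc, div_mul_cancel₀ _ hc₁.ne']
        linarith [neg_le_of_abs_le hG, sq ‖v‖]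
    _ ≤ (c₃ + 2 * c₅) / c₁ * M v v := by gcongr

theorem hasDerivWithinAt_integral_Ici {w : ℝ → ℝ} {a b t : ℝ} (hw : ContinuousOn w (Icc a b))
    (ht : t ∈ Ico a b) : HasDerivWithinAt (fun u => ∫ s in a..u, w s) (w t) (Ici t) t :=
  have hmem : Icc a b ∈ 𝓝[>] t := Icc_mem_nhdsGT_of_mem ht
  intervalIntegral.integral_hasDerivWithinAt_right
    ((hw.mono (Icc_subset_Icc_right ht.2.le)).intervalIntegrable_of_Icc ht.1)
    ⟨Icc a b, hmem, hw.aestronglyMeasurable measurableSet_Icc⟩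
    ((hw t (Ico_subset_Icc_self ht)).mono_of_mem_nhdsWithin hmem)

theorem add_integral_le_mul_exp {y y' w : ℝ → ℝ} {α a b : ℝ} (hα : 0 ≤ α)
    (hy : ∀ t ∈ Icc a b, HasDerivWithinAt y (y' t) (Icc a b) t)
    (hw : ContinuousOn w (Icc a b)) (hw₀ : ∀ t ∈ Icc a b, 0 ≤ w t)
    (h : ∀ t ∈ Icc a b, y' t + w t ≤ α * y t) :
    ∀ t ∈ Icc a b, y t + ∫ s in a..t, w s ≤ y a * exp (α * (t - a)) := by
  have hint₀ : ∀ t ∈ Icc a b, 0 ≤ ∫ s in a..t, w s := fun t ht =>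
    intervalIntegral.integral_nonneg ht.1 fun s hs => hw₀ s ⟨hs.1, hs.2.trans ht.2⟩
  have hcont : ContinuousOn (fun t => y t + ∫ s in a..t, w s) (Icc a b) := by
    refine ContinuousOn.add (fun t ht => (hy t ht).continuousWithinAt) fun t ht => ?_
    have hab : a ≤ b := ht.1.trans ht.2
    refine intervalIntegral.continuousWithinAt_primitive Real.volume_singleton ?_
    rw [min_self, max_eq_right hab]
    exact hw.intervalIntegrable_of_Icc hab
  have hderiv : ∀ t ∈ Ico a b,
      HasDerivWithinAt (fun t => y t + ∫ s in a..t, w s) (y' t + w t) (Ici t) t := fun t ht =>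
    ((hy t (Ico_subset_Icc_self ht)).mono_of_mem_nhdsWithin (Icc_mem_nhdsGE_of_mem ht)).add
      (hasDerivWithinAt_integral_Ici hw ht)
  have hbound : ∀ t ∈ Ico a b, y' t + w t ≤ α * (y t + ∫ s in a..t, w s) + 0 := fun t ht => by
    have := mul_nonneg hα (hint₀ t (Ico_subset_Icc_self ht))
    linarith [h t (Ico_subset_Icc_self ht)]
  intro t ht
  simpa only [gronwallBound_ε0] using le_gronwallBound_of_liminf_deriv_right_le hcont
    (fun x hx _ hr => (hderiv x hx).liminf_right_slope_le hr) (by simp) hbound t ht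

theorem le_mul_exp_and_integral_le_mul_exp {y y' w : ℝ → ℝ} {α a b : ℝ} (hα : 0 ≤ α)
    (hy : ∀ t ∈ Icc a b, HasDerivWithinAt y (y' t) (Icc a b) t) (hy₀ : ∀ t ∈ Icc a b, 0 ≤ y t)
    (hw : ContinuousOn w (Icc a b)) (hw₀ : ∀ t ∈ Icc a b, 0 ≤ w t)
    (h : ∀ t ∈ Icc a b, y' t + w t ≤ α * y t) {t : ℝ} (ht : t ∈ Icc a b) :
    y t ≤ y a * exp (α * (b - a)) ∧ ∫ s in a..b, w s ≤ y a * exp (α * (b - a)) := by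
  have hb : b ∈ Icc a b := ⟨ht.1.trans ht.2, le_rfl⟩
  have hgron := add_integral_le_mul_exp hα hy hw hw₀ h
  have hexp : y a * exp (α * (t - a)) ≤ y a * exp (α * (b - a)) := by
    gcongr
    · exact hy₀ a ⟨le_rfl, hb.1⟩
    · exact ht.2
  have hint₀ : 0 ≤ ∫ s in a..t, w s :=
    intervalIntegral.integral_nonneg ht.1 fun s hs => hw₀ s ⟨hs.1, hs.2.trans ht.2⟩
  constructor
  · linarith [hgron t ht]
  · linarith [hgron b hb, hy₀ b hb]

theorem evolving_galerkin_stability_general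
    {W : Type*} [NormedAddCommGroup W] [NormedSpace ℝ W]
    (T : ℝ) (hT : 0 < T)
    (m a g : ℝ → W → W → ℝ) (nV : W → ℝ)
    (c₁ c₂ c₃ c₄ c₅ : ℝ)
    (hc₁ : 0 < c₁) (hc₃ : 0 < c₃) (hc₄ : 0 < c₄) (hc₅ : 0 < c₅)
    (hmsymm : ∀ t ∈ Set.Icc (0 : ℝ) T, ∀ v φ : W, m t v φ = m t φ v)
    (hmbnd : ∀ t ∈ Set.Icc (0 : ℝ) T, ∀ v : W,
      c₁ * ‖v‖ ^ 2 ≤ m t v v ∧ m t v v ≤ c₂ * ‖v‖ ^ 2)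
    (hgbnd : ∀ t ∈ Set.Icc (0 : ℝ) T, ∀ v φ : W, |g t v φ| ≤ c₃ * ‖v‖ * ‖φ‖)
    (hacoerc : ∀ t ∈ Set.Icc (0 : ℝ) T, ∀ v : W,
      c₄ * (nV v) ^ 2 - c₅ * ‖v‖ ^ 2 ≤ a t v v)
    (U Ud : ℝ → W)
    (hU : ∀ t ∈ Set.Icc (0 : ℝ) T, HasDerivWithinAt U (Ud t) (Set.Icc 0 T) t)
    (hnVc : ContinuousOn (fun s => nV (U s)) (Set.Icc 0 T))
    (htransport : ∀ φ φd : ℝ → W,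
      (∀ t ∈ Set.Icc (0 : ℝ) T, HasDerivWithinAt φ (φd t) (Set.Icc 0 T) t) →
      ∀ t ∈ Set.Icc (0 : ℝ) T,
        HasDerivWithinAt (fun s => m s (φ s) (φ s))
          (2 * m t (φd t) (φ t) + g t (φ t) (φ t)) (Set.Icc 0 T) t)
    (hscheme : ∀ φ φd : ℝ → W,
      (∀ t ∈ Set.Icc (0 : ℝ) T, HasDerivWithinAt φ (φd t) (Set.Icc 0 T) t) →
      ∀ t ∈ Set.Icc (0 : ℝ) T,
        HasDerivWithinAt (fun s => m s (U s) (φ s))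
          (m t (U t) (φd t) - a t (U t) (φ t)) (Set.Icc 0 T) t) :
    (∀ t ∈ Set.Icc (0 : ℝ) T,
      HasDerivWithinAt (fun s => m s (U s) (U s))
        (-(g t (U t) (U t)) - 2 * a t (U t) (U t)) (Set.Icc 0 T) t) ∧
    (∀ t ∈ Set.Icc (0 : ℝ) T,
      ‖U t‖ ^ 2 + ∫ s in Set.Icc (0 : ℝ) T, (nV (U s)) ^ 2
        ≤ ((c₂ / c₁ + c₂ / (2 * c₄)) * (1 + ((c₃ + 2 * c₅) / c₁) * T) *
            Real.exp (((c₃ + 2 * c₅) / c₁) * T)) * ‖U 0‖ ^ 2) := by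
  have henergy : ∀ t ∈ Icc (0 : ℝ) T, HasDerivWithinAt (fun s => m s (U s) (U s))
      (-(g t (U t) (U t)) - 2 * a t (U t) (U t)) (Icc 0 T) t := fun t ht =>
    hasDerivWithinAt_energy (uniqueDiffOn_Icc hT t ht) (hmsymm t ht _ _)
      (hscheme U Ud hU t ht) (htransport U Ud hU t ht)
  refine ⟨henergy, fun t ht => ?_⟩
  set α := (c₃ + 2 * c₅) / c₁
  set E := m 0 (U 0) (U 0) * exp (α * T)
  have hc : 0 ≤ c₃ + 2 * c₅ := by positivity
  obtain ⟨hyt, hJ⟩ := le_mul_exp_and_integral_le_mul_exp (α := α)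
    (w := fun s => 2 * c₄ * nV (U s) ^ 2) (div_nonneg hc hc₁.le) henergy
    (fun s hs => (by positivity : 0 ≤ c₁ * ‖U s‖ ^ 2).trans (hmbnd s hs _).1)
    (continuousOn_const.mul (hnVc.pow 2)) (fun s _ => by positivity)
    (fun s hs => energy_rate_add_le hc₁ hc (hmbnd s hs _).1 (hgbnd s hs _ _) (hacoerc s hs _)) ht
  rw [sub_zero] at hyt
  rw [intervalIntegral.integral_const_mul, intervalIntegral.integral_of_le hT.le,
    ← integral_Icc_eq_integral_Ioc, sub_zero] at hJ
  have hUt : c₁ * ‖U t‖ ^ 2 ≤ E := (hmbnd t ht _).1.trans hyt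
  have hE : 0 ≤ E := (by positivity : 0 ≤ c₁ * ‖U t‖ ^ 2).trans hUt
  calc ‖U t‖ ^ 2 + ∫ s in Icc 0 T, nV (U s) ^ 2
      ≤ E / c₁ + E / (2 * c₄) :=
        add_le_add ((le_div_iff₀' hc₁).2 hUt) ((le_div_iff₀' (by positivity)).2 hJ)
    _ = (1 / c₁ + 1 / (2 * c₄)) * E := by ring
    _ ≤ (1 / c₁ + 1 / (2 * c₄)) * E * (1 + α * T) :=
        le_mul_of_one_le_right (by positivity) (le_add_of_nonneg_right (by positivity))
    _ ≤ (1 / c₁ + 1 / (2 * c₄)) * (c₂ * ‖U 0‖ ^ 2 * exp (α * T)) * (1 + α * T) := by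
        gcongr
        exact mul_le_mul_of_nonneg_right (hmbnd 0 ⟨le_rfl, hT.le⟩ _).2 (exp_pos _).le
    _ = (c₂ / c₁ + c₂ / (2 * c₄)) * (1 + α * T) * exp (α * T) * ‖U 0‖ ^ 2 := by ring

/-- Abstract stability of the evolving Galerkin scheme: if `U` solves
`d/dt m_h(t;U,φ) + a_h(t;U,φ) = m_h(t;U,∂°φ)` for all test trajectories `φ`,
the transport identity `(1/2) d/dt m_h(t;φ,φ) = m_h(t;∂°φ,φ) + (1/2) g_h(t;φ,φ)`
holds, `m_h` is symmetric and equivalent to `‖·‖²`, `g_h` is bounded, and `a_h`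
satisfies a Gårding inequality, then testing with `φ = U` gives
`(1/2) d/dt m_h(t;U,U) + a_h(t;U,U) = -(1/2) g_h(t;U,U)`, and consequently
`sup_t ‖U(t)‖² + ∫₀ᵀ ‖U‖_{V_h}² ≤ C ‖U(0)‖²` with `C` depending only on
`c₁,…,c₅, T`. -/
theorem evolving_galerkin_stability
    {W : Type*} [NormedAddCommGroup W] [NormedSpace ℝ W] [FiniteDimensional ℝ W]
    (T : ℝ) (hT : 0 < T)
    (m a g : ℝ → W → W → ℝ) (nV : W → ℝ)
    (hnV : ∀ v : W, ‖v‖ ≤ nV v)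
    (c₁ c₂ c₃ c₄ c₅ : ℝ)
    (hc₁ : 0 < c₁) (hc₂ : 0 < c₂) (hc₃ : 0 < c₃) (hc₄ : 0 < c₄) (hc₅ : 0 < c₅)
    (hmsymm : ∀ t ∈ Set.Icc (0 : ℝ) T, ∀ v φ : W, m t v φ = m t φ v)
    (hmbnd : ∀ t ∈ Set.Icc (0 : ℝ) T, ∀ v : W,
      c₁ * ‖v‖ ^ 2 ≤ m t v v ∧ m t v v ≤ c₂ * ‖v‖ ^ 2)
    (hgbnd : ∀ t ∈ Set.Icc (0 : ℝ) T, ∀ v φ : W, |g t v φ| ≤ c₃ * ‖v‖ * ‖φ‖)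
    (hacoerc : ∀ t ∈ Set.Icc (0 : ℝ) T, ∀ v : W,
      c₄ * (nV v) ^ 2 - c₅ * ‖v‖ ^ 2 ≤ a t v v)
    (U Ud : ℝ → W)
    (hU : ∀ t ∈ Set.Icc (0 : ℝ) T, HasDerivWithinAt U (Ud t) (Set.Icc 0 T) t)
    (hUc : ContinuousOn U (Set.Icc 0 T))
    (hnVc : ContinuousOn (fun s => nV (U s)) (Set.Icc 0 T))
    (hac : ContinuousOn (fun s => a s (U s) (U s)) (Set.Icc 0 T))
    (hgc : ContinuousOn (fun s => g s (U s) (U s)) (Set.Icc 0 T))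
    (htransport : ∀ φ φd : ℝ → W,
      (∀ t ∈ Set.Icc (0 : ℝ) T, HasDerivWithinAt φ (φd t) (Set.Icc 0 T) t) →
      ∀ t ∈ Set.Icc (0 : ℝ) T,
        HasDerivWithinAt (fun s => m s (φ s) (φ s))
          (2 * m t (φd t) (φ t) + g t (φ t) (φ t)) (Set.Icc 0 T) t)
    (hscheme : ∀ φ φd : ℝ → W,
      (∀ t ∈ Set.Icc (0 : ℝ) T, HasDerivWithinAt φ (φd t) (Set.Icc 0 T) t) →
      ∀ t ∈ Set.Icc (0 : ℝ) T,
        HasDerivWithinAt (fun s => m s (U s) (φ s))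
          (m t (U t) (φd t) - a t (U t) (φ t)) (Set.Icc 0 T) t) :
    (∀ t ∈ Set.Icc (0 : ℝ) T,
      HasDerivWithinAt (fun s => m s (U s) (U s))
        (-(g t (U t) (U t)) - 2 * a t (U t) (U t)) (Set.Icc 0 T) t) ∧
    (∀ t ∈ Set.Icc (0 : ℝ) T,
      ‖U t‖ ^ 2 + ∫ s in Set.Icc (0 : ℝ) T, (nV (U s)) ^ 2
        ≤ ((c₂ / c₁ + c₂ / (2 * c₄)) * (1 + ((c₃ + 2 * c₅) / c₁) * T) *
            Real.exp (((c₃ + 2 * c₅) / c₁) * T)) * ‖U 0‖ ^ 2) :=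
  evolving_galerkin_stability_general T hT m a g nV c₁ c₂ c₃ c₄ c₅ hc₁ hc₃ hc₄ hc₅ hmsymm hmbnd
    hgbnd hacoerc U Ud hU hnVc htransport hscheme
end
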